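/- Let f : EuclideanSpace ℝ (Fin n) → ℝ be differentiable, bounded below by f_low, with ∇f Lipschitz continuous. Consider iterates of the IBO trust-region algorithm: sequences x_k, Δ_k with Δ_0 > 0, quadratic models m_k about x_k with data (c_k, g_k, H_k), H_k symmetric with ‖H_k‖ ≤ κ_H − 1 for some κ_H ≥ 1, each m_k fully linear for f in B(x_k, Δ_k) with constants κ_mf, κ_mg > 0 independent of k, and steps s_k with ‖s_k‖ ≤ Δ_k and m_k(x_k) − m_k(x_k + s_k) ≥ κ_s·‖g_k‖·min(Δ_k, ‖g_k‖/(‖H_k‖ + 1)) for some κ_s ∈ (0, 1/2); with ρ_k := (f(x_k) − f(x_k + s_k))/(m_k(x_k) − m_k(x_k + s_k)), the updates are: if ρ_k ≥ η_S and ‖g_k‖ ≥ μ_c·Δ_k then x_{k+1} = x_k + s_k and Δ_{k+1} = γ_inc·Δ_k; otherwise if ρ_k ≥ η_U and ‖g_k‖ ≥ μ_c·Δ_k then x_{k+1} = x_k + s_k and Δ_{k+1} = Δ_k; otherwise x_{k+1} = x_k and Δ_{k+1} = γ_dec·Δ_k, where 0 < γ_dec < 1 < γ_inc, 0 < η_U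 ≤ η_S < 1, μ_c > 0. Then the trust-region radii converge to zero: Δ_k → 0 as k → ∞. -/

import Mathlib

open scoped RealInnerProductSpace
open Metric

noncomputable section

/-- Matrix–vector multiplication as a map on Euclidean space. -/
def mulVecE {n : ℕ} (H : Matrix (Fin n) (Fin n) ℝ) (v : EuclideanSpace ℝ (Fin n)) :
    EuclideanSpace ℝ (Fin n) :=
  (EuclideanSpace.equiv (Fin n) ℝ).symm (H.mulVec (EuclideanSpace.equiv (Fin n) ℝ v))

/-- Operator 2-norm of a matrix (the norm induced by the Euclidean vector norm). -/
def opNorm {n : ℕ} (H : Matrix (Fin n) (Fin n) ℝ) : ℝ :=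
  sSup {r : ℝ | ∃ v : EuclideanSpace ℝ (Fin n), ‖v‖ ≤ 1 ∧ r = ‖mulVecE H v‖}

/-- Quadratic model about `x` with data `(c, g, H)`. -/
def qm {n : ℕ} (x : EuclideanSpace ℝ (Fin n)) (c : ℝ) (g : EuclideanSpace ℝ (Fin n))
    (H : Matrix (Fin n) (Fin n) ℝ) (y : EuclideanSpace ℝ (Fin n)) : ℝ :=
  c + ⟪g, y - x⟫ + (1 / 2) * ⟪y - x, mulVecE H (y - x)⟫

/-- `m` is a fully linear model for `f` on the closed ball `B(x, Δ)`. -/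
def IsFullyLinear {n : ℕ} (f m : EuclideanSpace ℝ (Fin n) → ℝ)
    (x : EuclideanSpace ℝ (Fin n)) (Δ κmf κmg : ℝ) : Prop :=
  ∀ y ∈ closedBall x Δ,
    |m y - f y| ≤ κmf * Δ ^ 2 ∧ ‖gradient m y - gradient f y‖ ≤ κmg * Δ

/-- `m` is a fully quadratic model for `f` on the closed ball `B(x, Δ)`. -/
def IsFullyQuadratic {n : ℕ} (f m : EuclideanSpace ℝ (Fin n) → ℝ)
    (x : EuclideanSpace ℝ (Fin n)) (Δ κmf κmg κmh : ℝ) : Prop :=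
  ∀ y ∈ closedBall x Δ,
    |m y - f y| ≤ κmf * Δ ^ 3 ∧ ‖gradient m y - gradient f y‖ ≤ κmg * Δ ^ 2 ∧
      ‖fderiv ℝ (gradient m) y - fderiv ℝ (gradient f) y‖ ≤ κmh * Δ

/-- Smallest eigenvalue of a symmetric matrix: the minimum of `⟪u, H u⟫` over unit vectors. -/
def lambdaMin {n : ℕ} (H : Matrix (Fin n) (Fin n) ℝ) : ℝ :=
  sInf {r : ℝ | ∃ u : EuclideanSpace ℝ (Fin n), ‖u‖ = 1 ∧ r = ⟪u, mulVecE H u⟫}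

/-- `τ(H) = max(-λ_min(H), 0)`. -/
def tau {n : ℕ} (H : Matrix (Fin n) (Fin n) ℝ) : ℝ := max (-lambdaMin H) 0

/-- Hessian matrix of `f` at `x`. -/
def hessMat {n : ℕ} (f : EuclideanSpace ℝ (Fin n) → ℝ) (x : EuclideanSpace ℝ (Fin n)) :
    Matrix (Fin n) (Fin n) ℝ :=
  Matrix.of fun i j => fderiv ℝ (gradient f) x (EuclideanSpace.single j 1) i

/-- ℓ∞ operator norm of a matrix: the maximum absolute row sum. -/
def linftyNorm {m k : Type*} [Fintype m] [Fintype k] (A : Matrix m k ℝ) : ℝ :=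
  sSup (Set.range fun i => ∑ j, |A i j|)

/-! On a successful iteration the Cauchy-type decrease together with `‖g_k‖ ≥ μ_c Δ_k` makes the
model, hence `f`, decrease by at least a fixed multiple of `Δ_k²`; as `f` is bounded below and
never increases, the successful `Δ_k²` are summable, so the successful radii tend to zero. The
remaining iterations shrink the radius by `γ_dec < 1`, so `Δ_{k+1} ≤ γ_dec Δ_k + e_k`, where
`e_k = γ_inc Δ_k` on successful iterations and `0` otherwise; since `e_k → 0`, this forces
`Δ_k → 0`. -/

open Filter Topology

theorem summable_of_le_sub_succ {b F : ℕ → ℝ} {c : ℝ} (hb : ∀ k, 0 ≤ b k)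
    (hbF : ∀ k, b k ≤ F k - F (k + 1)) (hF : ∀ k, c ≤ F k) : Summable b := by
  refine summable_of_sum_range_le (c := F 0 - c) hb fun N => ?_
  have htelescope : ∑ k ∈ Finset.range N, b k ≤ F 0 - F N := by
    rw [← Finset.sum_range_sub']
    exact Finset.sum_le_sum fun k _ => hbF k
  linarith [hF N]

theorem tendsto_zero_of_le_mul_add {u e : ℕ → ℝ} {q : ℝ} (hq0 : 0 ≤ q) (hq1 : q < 1)
    (hu : ∀ k, 0 ≤ u k) (he : Tendsto e atTop (𝓝 0))
    (hrec : ∀ k, u (k + 1) ≤ q * u k + e k) : Tendsto u atTop (𝓝 0) := by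
  refine tendsto_order.2 ⟨fun a ha => Eventually.of_forall fun k => ha.trans_le (hu k),
    fun ε hε => ?_⟩
  obtain ⟨K, hK⟩ := eventually_atTop.1 ((tendsto_order.1 he).2 ((1 - q) * (ε / 2))
    (by nlinarith))
  -- once `e k ≤ (1 - q) ε / 2`, the excess of `u` over `ε / 2` contracts by the factor `q`
  have hcontract : ∀ j, u (K + j) ≤ ε / 2 + q ^ j * u K := by
    intro j
    induction j with
    | zero => simp only [add_zero, pow_zero, one_mul]; linarith
    | succ j ih =>
      have hstep := hrec (K + j)
      have hsmall := hK (K + j) (Nat.le_add_right K j)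
      rw [← add_assoc, pow_succ]
      nlinarith [mul_le_mul_of_nonneg_left ih hq0]
  have hgeom : Tendsto (fun j => q ^ j * u K) atTop (𝓝 0) := by
    simpa using (tendsto_pow_atTop_nhds_zero_of_lt_one hq0 hq1).mul_const (u K)
  obtain ⟨J, hJ⟩ := eventually_atTop.1 ((tendsto_order.1 hgeom).2 (ε / 2) (by positivity))
  refine eventually_atTop.2 ⟨K + J, fun k hk => ?_⟩
  obtain ⟨j, rfl⟩ := Nat.exists_eq_add_of_le (le_of_add_le_left hk)
  linarith [hcontract j, hJ j (by omega)]

theorem tendsto_indicator_of_sq_le_sub_succ {Δ F : ℕ → ℝ} {S : Set ℕ} {c flow : ℝ} (hc : 0 < c)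
    (hΔ : ∀ k, 0 ≤ Δ k) (hdec : ∀ k ∈ S, c * Δ k ^ 2 ≤ F k - F (k + 1))
    (hmono : ∀ k ∉ S, F (k + 1) ≤ F k) (hF : ∀ k, flow ≤ F k) :
    Tendsto (S.indicator Δ) atTop (𝓝 0) := by
  have hsum : Summable (S.indicator fun k => c * Δ k ^ 2) := by
    refine summable_of_le_sub_succ (Set.indicator_nonneg fun k _ => by positivity)
      (fun k => ?_) hF
    by_cases hk : k ∈ S
    · rw [Set.indicator_of_mem hk]
      exact hdec k hk
    · rw [Set.indicator_of_notMem hk]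
      linarith [hmono k hk]
  have hsqrt : S.indicator Δ = fun k => √(S.indicator (fun k => c * Δ k ^ 2) k / c) := by
    ext k
    by_cases hk : k ∈ S
    · rw [Set.indicator_of_mem hk, Set.indicator_of_mem hk, mul_div_cancel_left₀ _ hc.ne',
        Real.sqrt_sq (hΔ k)]
    · rw [Set.indicator_of_notMem hk, Set.indicator_of_notMem hk, zero_div, Real.sqrt_zero]
  rw [hsqrt]
  simpa using (hsum.tendsto_atTop_zero.div_const c).sqrt

theorem tendsto_zero_of_tendsto_indicator {Δ : ℕ → ℝ} {S : Set ℕ} {γdec γinc : ℝ}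
    (hγdec0 : 0 ≤ γdec) (hγdec1 : γdec < 1) (hΔ : ∀ k, 0 ≤ Δ k)
    (hS : Tendsto (S.indicator Δ) atTop (𝓝 0))
    (hsucc : ∀ k ∈ S, Δ (k + 1) ≤ γinc * Δ k) (hfail : ∀ k ∉ S, Δ (k + 1) ≤ γdec * Δ k) :
    Tendsto Δ atTop (𝓝 0) := by
  refine tendsto_zero_of_le_mul_add hγdec0 hγdec1 hΔ (by simpa using hS.const_mul γinc)
    fun k => ?_
  by_cases hk : k ∈ S
  · rw [Set.indicator_of_mem hk]
    linarith [hsucc k hk, mul_nonneg hγdec0 (hΔ k)]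
  · rw [Set.indicator_of_notMem hk, mul_zero, add_zero]
    exact hfail k hk

theorem sq_mul_le_cauchy_decrease {κs μ κ a G Δ : ℝ} (hκs : 0 ≤ κs) (hμ : 0 < μ)
    (ha : 0 ≤ a) (haκ : a + 1 ≤ κ) (hΔ : 0 ≤ Δ) (hG : μ * Δ ≤ G) :
    κs * μ * min 1 (μ / κ) * Δ ^ 2 ≤ κs * G * min Δ (G / (a + 1)) := by
  have hG0 : 0 ≤ G := (mul_nonneg hμ.le hΔ).trans hG
  have hmin : min 1 (μ / κ) * Δ ≤ min Δ (G / (a + 1)) := by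
    rw [min_mul_of_nonneg _ _ hΔ, one_mul, div_mul_eq_mul_div]
    exact min_le_min le_rfl (div_le_div₀ hG0 hG (by positivity) haκ)
  calc κs * μ * min 1 (μ / κ) * Δ ^ 2 = κs * (μ * Δ) * (min 1 (μ / κ) * Δ) := by ring
    _ ≤ κs * G * min Δ (G / (a + 1)) := by
      gcongr
      have : 0 < κ := by linarith
      positivity

theorem opNorm_nonneg {n : ℕ} (H : Matrix (Fin n) (Fin n) ℝ) : 0 ≤ opNorm H :=
  Real.sSup_nonneg fun _ ⟨_, _, hr⟩ => hr ▸ norm_nonneg _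

theorem ibo_delta_tendsto_zero_general {n : ℕ}
    (f : EuclideanSpace ℝ (Fin n) → ℝ)
    (flow : ℝ) (hflow : ∀ y, flow ≤ f y)
    (x : ℕ → EuclideanSpace ℝ (Fin n)) (Δ : ℕ → ℝ) (hΔpos : ∀ k, 0 < Δ k)
    (g : ℕ → EuclideanSpace ℝ (Fin n))
    (H : ℕ → Matrix (Fin n) (Fin n) ℝ)
    (κH : ℝ) (hHnorm : ∀ k, opNorm (H k) ≤ κH - 1)
    (m : ℕ → EuclideanSpace ℝ (Fin n) → ℝ)
    (s : ℕ → EuclideanSpace ℝ (Fin n))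
    (κs : ℝ) (hκs : κs ∈ Set.Ioo (0 : ℝ) (1 / 2))
    (hdec : ∀ k, κs * ‖g k‖ * min (Δ k) (‖g k‖ / (opNorm (H k) + 1)) ≤
      m k (x k) - m k (x k + s k))
    (γdec γinc ηU ηS μc : ℝ)
    (hγdec0 : 0 < γdec) (hγdec1 : γdec < 1) (hγinc : 1 < γinc)
    (hηU : 0 < ηU) (hμc : 0 < μc)
    (ρ : ℕ → ℝ)
    (hρ : ∀ k, ρ k = (f (x k) - f (x k + s k)) / (m k (x k) - m k (x k + s k)))
    (hVS : ∀ k, (ηS ≤ ρ k ∧ μc * Δ k ≤ ‖g k‖) →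
      x (k + 1) = x k + s k ∧ Δ (k + 1) = γinc * Δ k)
    (hS : ∀ k, ¬(ηS ≤ ρ k ∧ μc * Δ k ≤ ‖g k‖) → (ηU ≤ ρ k ∧ μc * Δ k ≤ ‖g k‖) →
      x (k + 1) = x k + s k ∧ Δ (k + 1) = Δ k)
    (hU : ∀ k, ¬(ηU ≤ ρ k ∧ μc * Δ k ≤ ‖g k‖) →
      x (k + 1) = x k ∧ Δ (k + 1) = γdec * Δ k) :
    Filter.Tendsto Δ Filter.atTop (nhds 0) := by
  set S : Set ℕ := {k | ηU ≤ ρ k ∧ μc * Δ k ≤ ‖g k‖}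
  set c := κs * μc * min 1 (μc / κH)
  have hc : 0 < c := by
    have : 0 < κH := by linarith [hHnorm 0, opNorm_nonneg (H 0)]
    have := hκs.1
    positivity
  have hsucc : ∀ k ∈ S, x (k + 1) = x k + s k ∧ Δ (k + 1) ≤ γinc * Δ k := by
    intro k hk
    by_cases hvs : ηS ≤ ρ k ∧ μc * Δ k ≤ ‖g k‖
    · exact ⟨(hVS k hvs).1, (hVS k hvs).2.le⟩
    · rw [(hS k hvs hk).2]
      exact ⟨(hS k hvs hk).1, le_mul_of_one_le_left (hΔpos k).le hγinc.le⟩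
  have hfdec : ∀ k ∈ S, ηU * c * Δ k ^ 2 ≤ f (x k) - f (x (k + 1)) := by
    intro k hk
    have hmodel : c * Δ k ^ 2 ≤ m k (x k) - m k (x k + s k) :=
      (sq_mul_le_cauchy_decrease hκs.1.le hμc (opNorm_nonneg _) (by linarith [hHnorm k])
        (hΔpos k).le hk.2).trans (hdec k)
    have hratio : ηU ≤ (f (x k) - f (x k + s k)) / (m k (x k) - m k (x k + s k)) :=
      hρ k ▸ hk.1
    rw [le_div_iff₀ ((mul_pos hc (pow_pos (hΔpos k) 2)).trans_le hmodel)] at hratio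
    rw [(hsucc k hk).1, mul_assoc]
    exact (mul_le_mul_of_nonneg_left hmodel hηU.le).trans hratio
  have hS_radii : Tendsto (S.indicator Δ) atTop (𝓝 0) :=
    tendsto_indicator_of_sq_le_sub_succ (mul_pos hηU hc) (fun k => (hΔpos k).le) hfdec
      (fun k hk => ((hU k hk).1 ▸ le_rfl)) fun k => hflow (x k)
  exact tendsto_zero_of_tendsto_indicator hγdec0.le hγdec1 (fun k => (hΔpos k).le) hS_radii
    (fun k hk => (hsucc k hk).2) fun k hk => (hU k hk).2.le

/-- The trust-region radii of the IBO trust-region method converge to zero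
(Lemma `lem_delta_decreases`). -/
theorem ibo_delta_tendsto_zero {n : ℕ}
    (f : EuclideanSpace ℝ (Fin n) → ℝ) (hf : Differentiable ℝ f)
    (flow : ℝ) (hflow : ∀ y, flow ≤ f y)
    (Lg : NNReal) (hLip : LipschitzWith Lg (gradient f))
    (x : ℕ → EuclideanSpace ℝ (Fin n)) (Δ : ℕ → ℝ) (hΔpos : ∀ k, 0 < Δ k)
    (cm : ℕ → ℝ) (g : ℕ → EuclideanSpace ℝ (Fin n))
    (H : ℕ → Matrix (Fin n) (Fin n) ℝ) (hHsymm : ∀ k, (H k).IsSymm)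
    (κH : ℝ) (hκH : 1 ≤ κH) (hHnorm : ∀ k, opNorm (H k) ≤ κH - 1)
    (m : ℕ → EuclideanSpace ℝ (Fin n) → ℝ)
    (hm : ∀ k y, m k y = qm (x k) (cm k) (g k) (H k) y)
    (κmf κmg : ℝ) (hκmf : 0 < κmf) (hκmg : 0 < κmg)
    (hFL : ∀ k, IsFullyLinear f (m k) (x k) (Δ k) κmf κmg)
    (s : ℕ → EuclideanSpace ℝ (Fin n)) (hs : ∀ k, ‖s k‖ ≤ Δ k)
    (κs : ℝ) (hκs : κs ∈ Set.Ioo (0 : ℝ) (1 / 2))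
    (hdec : ∀ k, κs * ‖g k‖ * min (Δ k) (‖g k‖ / (opNorm (H k) + 1)) ≤
      m k (x k) - m k (x k + s k))
    (γdec γinc ηU ηS μc : ℝ)
    (hγdec0 : 0 < γdec) (hγdec1 : γdec < 1) (hγinc : 1 < γinc)
    (hηU : 0 < ηU) (hηUS : ηU ≤ ηS) (hηS : ηS < 1) (hμc : 0 < μc)
    (ρ : ℕ → ℝ)
    (hρ : ∀ k, ρ k = (f (x k) - f (x k + s k)) / (m k (x k) - m k (x k + s k)))
    (hVS : ∀ k, (ηS ≤ ρ k ∧ μc * Δ k ≤ ‖g k‖) →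
      x (k + 1) = x k + s k ∧ Δ (k + 1) = γinc * Δ k)
    (hS : ∀ k, ¬(ηS ≤ ρ k ∧ μc * Δ k ≤ ‖g k‖) → (ηU ≤ ρ k ∧ μc * Δ k ≤ ‖g k‖) →
      x (k + 1) = x k + s k ∧ Δ (k + 1) = Δ k)
    (hU : ∀ k, ¬(ηU ≤ ρ k ∧ μc * Δ k ≤ ‖g k‖) →
      x (k + 1) = x k ∧ Δ (k + 1) = γdec * Δ k) :
    Filter.Tendsto Δ Filter.atTop (nhds 0) :=
  ibo_delta_tendsto_zero_general f flow hflow x Δ hΔpos g H κH hHnorm m s κs hκs hdec γdec γinc ηU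
    ηS μc hγdec0 hγdec1 hγinc hηU hμc ρ hρ hVS hS hU
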